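/- Let 𝒫 be an ideal of closed sets in X. Then the closure of C_𝒫(X) in C(X) with the topology of uniform convergence equals C_∞^𝒫(X) = {f ∈ C(X) : for all n ∈ ℕ, {x ∈ X : |f(x)| ≥ 1/n} ∈ 𝒫}. -/

import Mathlib

open TopologicalSpace
open scoped ENNReal NNReal

variable {X : Type*}

/-- The (possibly infinite) sup-distance between two continuous functions. -/
noncomputable def supDist [TopologicalSpace X] (f g : C(X, ℝ)) : ℝ≥0∞ :=
  ⨆ x, (‖f x - g x‖₊ : ℝ≥0∞)

/-- Basic set for the `U^I`-topology. -/
def UIball [TopologicalSpace X] (I : Ideal C(X, ℝ)) (f : C(X, ℝ)) (ε : ℝ) :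
    Set C(X, ℝ) :=
  {g | supDist f g < ENNReal.ofReal ε ∧ f - g ∈ I}

/-- The `U^I`-topology on `C(X, ℝ)`. -/
def UItop [TopologicalSpace X] (I : Ideal C(X, ℝ)) : TopologicalSpace C(X, ℝ) :=
  generateFrom {S | ∃ f ε, 0 < ε ∧ S = UIball I f ε}

/-- Basic set for the `m^I`-topology. -/
def mIball [TopologicalSpace X] (I : Ideal C(X, ℝ)) (f u : C(X, ℝ)) :
    Set C(X, ℝ) :=
  {g | (∀ x, |f x - g x| < u x) ∧ f - g ∈ I}

/-- The `m^I`-topology on `C(X, ℝ)`. -/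
def mItop [TopologicalSpace X] (I : Ideal C(X, ℝ)) : TopologicalSpace C(X, ℝ) :=
  generateFrom {S | ∃ f u, (∀ x, 0 < u x) ∧ S = mIball I f u}

/-- The topology of uniform convergence (`U`-topology) on `C(X, ℝ)`. -/
def Utop [TopologicalSpace X] : TopologicalSpace C(X, ℝ) :=
  generateFrom {S | ∃ (f : C(X, ℝ)) (ε : ℝ), 0 < ε ∧
    S = {g | supDist f g < ENNReal.ofReal ε}}

/-- The `m`-topology on `C(X, ℝ)`. -/
def mtop [TopologicalSpace X] : TopologicalSpace C(X, ℝ) :=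
  generateFrom {S | ∃ (f u : C(X, ℝ)), (∀ x, 0 < u x) ∧
    S = {g | ∀ x, |f x - g x| < u x}}

/-- The bounded continuous functions `C*(X)` as a subset of `C(X, ℝ)`. -/
def Cstar [TopologicalSpace X] : Set C(X, ℝ) :=
  {f | ∃ M : ℝ, ∀ x, |f x| ≤ M}

section aux
variable [TopologicalSpace X]

lemma supDist_self (f : C(X, ℝ)) : supDist f f = 0 := by simp [supDist]

lemma le_supDist (f g : C(X, ℝ)) (x : X) : (‖f x - g x‖₊ : ℝ≥0∞) ≤ supDist f g :=
  le_iSup (fun x => (‖f x - g x‖₊ : ℝ≥0∞)) x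

lemma supDist_triangle (f g h : C(X, ℝ)) : supDist f h ≤ supDist f g + supDist g h := by
  refine iSup_le fun x => ?_
  calc (‖f x - h x‖₊ : ℝ≥0∞) ≤ (‖f x - g x‖₊ : ℝ≥0∞) + (‖g x - h x‖₊ : ℝ≥0∞) := by
        rw [← ENNReal.coe_add]
        exact ENNReal.coe_le_coe.mpr (by
          simpa [← nndist_eq_nnnorm] using nndist_triangle (f x) (g x) (h x))
    _ ≤ _ := add_le_add (le_supDist f g x) (le_supDist g h x)

lemma exists_ball_subset (f : C(X, ℝ)) {U : Set C(X, ℝ)}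
    (hU : (Utop (X := X)).IsOpen U) (hf : f ∈ U) :
    ∃ ε : ℝ, 0 < ε ∧ {g | supDist f g < ENNReal.ofReal ε} ⊆ U := by
  revert hf
  induction hU with
  | basic s hs =>
      obtain ⟨f0, ε0, hε0, rfl⟩ := hs
      intro hf
      have ha : supDist f0 f < ENNReal.ofReal ε0 := hf
      obtain ⟨r, hr0, har, hrb⟩ := ENNReal.lt_iff_exists_real_btwn.mp ha
      have hane : supDist f0 f ≠ ⊤ := har.trans_le le_top |>.ne
      have htr : (supDist f0 f).toReal < r :=
        (ENNReal.lt_ofReal_iff_toReal_lt hane).mp har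
      refine ⟨r - (supDist f0 f).toReal, by linarith, fun g hg => ?_⟩
      have h1 : supDist f0 g ≤ supDist f0 f + supDist f g := supDist_triangle _ _ _
      have h2 : supDist f0 f + supDist f g <
          supDist f0 f + ENNReal.ofReal (r - (supDist f0 f).toReal) :=
        ENNReal.add_lt_add_left hane hg
      have h3 : supDist f0 f + ENNReal.ofReal (r - (supDist f0 f).toReal)
          = ENNReal.ofReal r := by
        have h4 := ENNReal.ofReal_add (p := (supDist f0 f).toReal)
          (q := r - (supDist f0 f).toReal) ENNReal.toReal_nonneg (by linarith)
        rw [ENNReal.ofReal_toReal hane] at h4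
        rw [← h4, add_sub_cancel]
      exact lt_trans (lt_of_le_of_lt h1 (h3 ▸ h2)) hrb
  | univ => exact fun _ => ⟨1, one_pos, fun _ _ => trivial⟩
  | inter s t _ _ ihs iht =>
      intro hf
      obtain ⟨ε1, hε1, h1⟩ := ihs hf.1
      obtain ⟨ε2, hε2, h2⟩ := iht hf.2
      refine ⟨min ε1 ε2, lt_min hε1 hε2, fun g hg => ?_⟩
      constructor
      · exact h1 (lt_of_lt_of_le hg (ENNReal.ofReal_le_ofReal (min_le_left _ _)))
      · exact h2 (lt_of_lt_of_le hg (ENNReal.ofReal_le_ofReal (min_le_right _ _)))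
  | sUnion S _ ih =>
      intro hf
      obtain ⟨t, htS, hft⟩ := hf
      obtain ⟨ε, hε, h⟩ := ih t htS hft
      exact ⟨ε, hε, fun g hg => ⟨t, htS, h hg⟩⟩

end aux

theorem stmt17 [TopologicalSpace X] [T2Space X] [CompletelyRegularSpace X]
    (P : Set (Set X)) (hclosed : ∀ E ∈ P, IsClosed E)
    (hunion : ∀ E ∈ P, ∀ F ∈ P, E ∪ F ∈ P)
    (hsub : ∀ E ∈ P, ∀ C : Set X, IsClosed C → C ⊆ E → C ∈ P) :
    @closure C(X, ℝ) Utop {f : C(X, ℝ) | closure {x | f x ≠ 0} ∈ P} =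
      {f : C(X, ℝ) | ∀ n : ℕ, 0 < n → {x | 1 / (n : ℝ) ≤ |f x|} ∈ P} := by
  ext f
  simp only [Set.mem_setOf_eq]
  constructor
  · intro hc n hn
    have hnR : (0:ℝ) < n := by exact_mod_cast hn
    have hεpos : (0:ℝ) < 1 / (2*n) := by positivity
    have hUopen : (Utop (X := X)).IsOpen
        {g | supDist f g < ENNReal.ofReal (1/(2*(n:ℝ)))} :=
      TopologicalSpace.isOpen_generateFrom_of_mem ⟨f, 1/(2*n), hεpos, rfl⟩
    have hfU : f ∈ {g | supDist f g < ENNReal.ofReal (1/(2*(n:ℝ)))} := by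
      simp only [Set.mem_setOf_eq, supDist_self]
      exact ENNReal.ofReal_pos.mpr hεpos
    obtain ⟨g, hgU, hgS⟩ := ((@mem_closure_iff _ Utop f _).mp hc) _ hUopen hfU
    have hpt : ∀ x, |f x - g x| < 1/(2*(n:ℝ)) := by
      intro x
      have h1 : (‖f x - g x‖₊ : ℝ≥0∞) < ENNReal.ofReal (1/(2*(n:ℝ))) :=
        lt_of_le_of_lt (le_supDist f g x) hgU
      rw [← enorm_eq_nnnorm, ← ofReal_norm] at h1
      have := (ENNReal.ofReal_lt_ofReal_iff hεpos).mp h1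
      rwa [Real.norm_eq_abs] at this
    have hsubset : {x | 1/(n:ℝ) ≤ |f x|} ⊆ closure {x | g x ≠ 0} := by
      intro x hx
      apply subset_closure
      intro h0
      have h1 := hpt x
      rw [h0, sub_zero] at h1
      have hx' : 1/(n:ℝ) ≤ |f x| := hx
      have h2 : 1/(2*(n:ℝ)) < 1/(n:ℝ) := by
        rw [div_lt_div_iff₀ (by linarith) hnR]; linarith
      linarith
    exact hsub _ hgS _ (isClosed_le continuous_const f.continuous.abs) hsubset
  · intro hP
    rw [@mem_closure_iff _ Utop f _]
    intro U hU hfU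
    obtain ⟨ε, hε, hball⟩ := exists_ball_subset f hU hfU
    set n : ℕ := ⌈1/ε⌉₊ + 1 with hndef
    have hn : 0 < n := Nat.succ_pos _
    have hnR : (0:ℝ) < n := by exact_mod_cast hn
    have hc : (0:ℝ) < 1/(n:ℝ) := by positivity
    have hcε : 1/(n:ℝ) < ε := by
      have h1 : 1/ε ≤ (⌈1/ε⌉₊ : ℝ) := Nat.le_ceil _
      have h2 : 1/ε < (n:ℝ) := by
        rw [hndef]; push_cast; linarith
      rw [div_lt_iff₀ hnR]
      have := (div_lt_iff₀ hε).mp h2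
      linarith
    set c : ℝ := 1/(n:ℝ) with hcdef
    set g : C(X, ℝ) := ⟨fun x => f x - max (-c) (min c (f x)),
      f.continuous.sub (continuous_const.max (continuous_const.min f.continuous))⟩
      with hgdef
    have hfg : ∀ x, f x - g x = max (-c) (min c (f x)) := by
      intro x; simp [hgdef]
    refine ⟨g, hball ?_, ?_⟩
    · have hb : ∀ x, ‖f x - g x‖ ≤ c := by
        intro x
        rw [Real.norm_eq_abs, hfg x, abs_le]
        refine ⟨le_max_left _ _, max_le (by linarith) (min_le_left _ _)⟩
      have hle : supDist f g ≤ ENNReal.ofReal c := by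
        refine iSup_le fun x => ?_
        rw [← enorm_eq_nnnorm, ← ofReal_norm]
        exact ENNReal.ofReal_le_ofReal (hb x)
      exact lt_of_le_of_lt hle ((ENNReal.ofReal_lt_ofReal_iff hε).mpr hcε)
    · refine hsub _ (hP n hn) _ isClosed_closure ?_
      refine closure_minimal ?_ (isClosed_le continuous_const f.continuous.abs)
      intro x hx
      by_contra h
      rw [Set.mem_setOf_eq, not_le] at h
      have hfc : |f x| < c := by rw [hcdef]; exact h
      apply hx
      have h1 : min c (f x) = f x :=
        min_eq_right (le_of_lt (lt_of_le_of_lt (le_abs_self _) hfc))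
      have h2 : max (-c) (f x) = f x :=
        max_eq_right (by have := neg_abs_le (f x); linarith [hfc])
      simp [hgdef, h1, h2]
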